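/- Let k be a field of characteristic zero, q ∈ k \ {0,1}, a = ∑ α_i h^i ∈ k[h] monic of degree N > 1, and l = σ(a) − a where σ(h) = qh. In the Smith algebra B generated by Y, H, X with relations HY = qYH, [X,Y] = l(H), XH = qHX, the element Ω = YX − a(H) is central and satisfies Ω = XY − a(qH). -/

import Mathlib

open Polynomial

/-- Generators: `ι 0 = Y`, `ι 1 = H`, `ι 2 = X`. Defining relations of the
Smith algebra `B_l` with `l(H) = a(qH) − a(H)`:
`HY = q·YH`, `XY − YX = l(H)`, `XH = q·HX`. -/
inductive smithRel (k : Type*) [CommRing k] (q : k) (a : Polynomial k) :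
    FreeAlgebra k (Fin 3) → FreeAlgebra k (Fin 3) → Prop
  | hy : smithRel k q a (FreeAlgebra.ι k 1 * FreeAlgebra.ι k 0)
      (q • (FreeAlgebra.ι k 0 * FreeAlgebra.ι k 1))
  | xy : smithRel k q a (FreeAlgebra.ι k 2 * FreeAlgebra.ι k 0)
      (FreeAlgebra.ι k 0 * FreeAlgebra.ι k 2 +
        (Polynomial.aeval (q • FreeAlgebra.ι k 1) a -
          Polynomial.aeval (FreeAlgebra.ι k 1) a))
  | xh : smithRel k q a (FreeAlgebra.ι k 2 * FreeAlgebra.ι k 1)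
      (q • (FreeAlgebra.ι k 1 * FreeAlgebra.ι k 2))

/-- The Smith algebra `B` associated to `q` and `a`. -/
abbrev Smith (k : Type*) [CommRing k] (q : k) (a : Polynomial k) :=
  RingQuot (smithRel k q a)

/-- `Y ∈ B`. -/
noncomputable def Smith.Y (k : Type*) [CommRing k] (q : k) (a : Polynomial k) :
    Smith k q a :=
  RingQuot.mkAlgHom k (smithRel k q a) (FreeAlgebra.ι k 0)

/-- `H ∈ B`. -/
noncomputable def Smith.H (k : Type*) [CommRing k] (q : k) (a : Polynomial k) :
    Smith k q a :=
  RingQuot.mkAlgHom k (smithRel k q a) (FreeAlgebra.ι k 1)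

/-- `X ∈ B`. -/
noncomputable def Smith.X (k : Type*) [CommRing k] (q : k) (a : Polynomial k) :
    Smith k q a :=
  RingQuot.mkAlgHom k (smithRel k q a) (FreeAlgebra.ι k 2)

/-- `Ω = YX − a(H) ∈ B`. -/
noncomputable def Smith.Omega (k : Type*) [CommRing k] (q : k) (a : Polynomial k) :
    Smith k q a :=
  Smith.Y k q a * Smith.X k q a - Polynomial.aeval (Smith.H k q a) a

/-!
The relations say that conjugating past `Y` or `X` rescales `H` by `q`, hence turns `a(H)` into
`a(qH)`. So `Y` and `X` commute with `YX − a(H)` exactly because `XY − YX = a(qH) − a(H)`, while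
`H` commutes with `YX` since the factor `q` it picks up passing `X` is removed again passing `Y`.
An element commuting with the generators is central.
-/

theorem SemiconjBy.aeval {R A : Type*} [CommSemiring R] [Semiring A] [Algebra R A] {c x y : A}
    (h : SemiconjBy c x y) (p : R[X]) : SemiconjBy c (aeval x p) (aeval y p) := by
  induction p using Polynomial.induction_on' with
  | add p r hp hr => simpa only [map_add] using hp.add_right hr
  | monomial n r =>
    simpa only [aeval_monomial] using
      SemiconjBy.mul_right (Algebra.commute_algebraMap_right r c) (h.pow_right n)

theorem RingQuot.commute_of_commute_mkAlgHom_ι {R ι : Type*} [CommSemiring R]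
    (s : FreeAlgebra R ι → FreeAlgebra R ι → Prop) {z : RingQuot s}
    (hz : ∀ i, Commute z (RingQuot.mkAlgHom R s (FreeAlgebra.ι R i))) (b : RingQuot s) :
    Commute z b := by
  obtain ⟨x, rfl⟩ := RingQuot.mkAlgHom_surjective R s b
  induction x using FreeAlgebra.induction with
  | grade0 r => simpa only [AlgHom.commutes] using Algebra.commute_algebraMap_right r z
  | grade1 i => exact hz i
  | mul x y hx hy => simpa only [map_mul] using hx.mul_right hy
  | add x y hx hy => simpa only [map_add] using hx.add_right hy

namespace Smith

variable (k : Type*) [CommRing k] (q : k) (a : k[X])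

theorem H_mul_Y : H k q a * Y k q a = Y k q a * (q • H k q a) := by
  rw [mul_smul_comm]
  have h := RingQuot.mkAlgHom_rel k (smithRel.hy (q := q) (a := a))
  rw [map_mul, map_smul, map_mul] at h
  exact h

theorem X_mul_Y :
    X k q a * Y k q a = Y k q a * X k q a + (aeval (q • H k q a) a - aeval (H k q a) a) := by
  have h := RingQuot.mkAlgHom_rel k (smithRel.xy (q := q) (a := a))
  simp only [map_add, map_sub, map_mul, map_smul, ← aeval_algHom_apply] at h
  exact h

theorem X_mul_H : X k q a * H k q a = q • H k q a * X k q a := by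
  rw [smul_mul_assoc]
  have h := RingQuot.mkAlgHom_rel k (smithRel.xh (q := q) (a := a))
  rw [map_mul, map_smul, map_mul] at h
  exact h

theorem Y_mul_aeval_smul_H (p : k[X]) :
    Y k q a * aeval (q • H k q a) p = aeval (H k q a) p * Y k q a :=
  SemiconjBy.aeval (H_mul_Y k q a).symm p

theorem X_mul_aeval_H (p : k[X]) :
    X k q a * aeval (H k q a) p = aeval (q • H k q a) p * X k q a :=
  SemiconjBy.aeval (X_mul_H k q a) p

theorem omega_eq_X_mul_Y_sub : Omega k q a = X k q a * Y k q a - aeval (q • H k q a) a := by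
  rw [X_mul_Y, Omega]
  abel

theorem commute_omega_Y : Commute (Omega k q a) (Y k q a) := by
  change _ = _
  rw [Omega, sub_mul, mul_sub, mul_assoc, X_mul_Y, ← Y_mul_aeval_smul_H, mul_add, mul_sub]
  abel

theorem commute_omega_H : Commute (Omega k q a) (H k q a) := by
  have hH : H k q a * aeval (H k q a) a = aeval (H k q a) a * H k q a :=
    SemiconjBy.aeval (Commute.refl (H k q a)) a
  change _ = _
  rw [Omega, sub_mul, mul_sub, mul_assoc, X_mul_H, ← mul_assoc, ← H_mul_Y, mul_assoc, hH]

theorem commute_omega_X : Commute (Omega k q a) (X k q a) := by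
  change _ = _
  rw [Omega, sub_mul, mul_sub, X_mul_aeval_H, ← mul_assoc, X_mul_Y, add_mul, sub_mul]
  abel

theorem commute_omega (b : Smith k q a) : Commute (Omega k q a) b := by
  refine RingQuot.commute_of_commute_mkAlgHom_ι _ (fun i => ?_) b
  fin_cases i
  · exact commute_omega_Y k q a
  · exact commute_omega_H k q a
  · exact commute_omega_X k q a

end Smith

theorem smith_omega_central_general (k : Type*) [Field k] (q : k) (a : k[X]) :
    (∀ b : Smith k q a, Smith.Omega k q a * b = b * Smith.Omega k q a) ∧
      Smith.Omega k q a =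
        Smith.X k q a * Smith.Y k q a - aeval (q • Smith.H k q a) a :=
  ⟨Smith.commute_omega k q a, Smith.omega_eq_X_mul_Y_sub k q a⟩

/-- In the Smith algebra `B` with relations `HY = qYH`, `[X,Y] = a(qH) − a(H)`,
`XH = qHX`, the element `Ω = YX − a(H)` is central and equals `XY − a(qH)`. -/
theorem smith_omega_central (k : Type*) [Field k] [CharZero k] (q : k)
    (hq0 : q ≠ 0) (hq1 : q ≠ 1) (a : k[X]) (hmonic : a.Monic)
    (hdeg : 1 < a.natDegree) :
    (∀ b : Smith k q a, Smith.Omega k q a * b = b * Smith.Omega k q a) ∧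
      Smith.Omega k q a =
        Smith.X k q a * Smith.Y k q a - aeval (q • Smith.H k q a) a :=
  smith_omega_central_general k q a
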